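/- arXiv:0811.2383 — 3 statements merged into one kernel-verified Lean document; each statement's English description precedes it below -/
import Mathlib

section
/- Let a group H act on a tree Y of infinite diameter such that the action of H on the edge set of Y has finitely many orbits. Then H contains a hyperbolic element, i.e. an element of H that fixes no vertex of Y. -/
/-!
Take a path `x₀ x₁ … x_n` in the tree with `n` larger than twice the number of edge orbits. By
pigeonhole two of its oriented edges `(xᵢ, xᵢ₊₁)` and `(xⱼ, xⱼ₊₁)`, `i < j`, lie in one orbit, say
`g • (xᵢ, xᵢ₊₁) = (xⱼ, xⱼ₊₁)`. If `g` fixed a vertex `z`, the distances from `z` to `xᵢ, xᵢ₊₁` and to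
`xⱼ, xⱼ₊₁` would agree. But along a path in a tree the distance to `z` changes by one at each step,
and once it increases it keeps increasing, so no pair of consecutive values can recur.
-/

open SimpleGraph Finset

/-- The profile of the distances to a fixed vertex along a path in a tree. -/
structure IsVShapedOn (f : ℕ → ℕ) (n : ℕ) : Prop where
  step : ∀ r < n, f (r + 1) = f r + 1 ∨ f r = f (r + 1) + 1
  ascend : ∀ r, r + 1 < n → f (r + 1) = f r + 1 → f (r + 2) = f (r + 1) + 1

namespace IsVShapedOn

variable {f : ℕ → ℕ} {n i j : ℕ}

lemma ascend_of_le (hf : IsVShapedOn f n) (hi : f (i + 1) = f i + 1) :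
    ∀ r, i ≤ r → r < n → f (r + 1) = f r + 1 := by
  intro r hir
  induction r, hir using Nat.le_induction with
  | base => exact fun _ ↦ hi
  | succ r _ ih => exact fun hr ↦ hf.ascend r hr (ih (by omega))

lemma descend_of_le (hf : IsVShapedOn f n) (hj : j < n) (hdesc : f j = f (j + 1) + 1)
    {r : ℕ} (hrj : r ≤ j) : f r = f (r + 1) + 1 :=
  (hf.step r (by omega)).resolve_left fun hasc ↦ by
    have := hf.ascend_of_le hasc j hrj hj
    omega

lemma strictMonoOn_of_ascend (hf : IsVShapedOn f n) (hi : f (i + 1) = f i + 1) :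
    StrictMonoOn f (Set.Icc i n) :=
  strictMonoOn_of_lt_succ Set.ordConnected_Icc fun r _ hr hr' ↦ by
    simp only [Order.succ_eq_add_one, Set.mem_Icc] at hr hr' ⊢
    have := hf.ascend_of_le hi r hr.1 (by omega)
    omega

lemma strictAntiOn_of_descend (hf : IsVShapedOn f n) (hj : j < n) (hdesc : f j = f (j + 1) + 1) :
    StrictAntiOn f (Set.Iic j) :=
  strictAntiOn_Iic_of_succ_lt fun r hr ↦ by
    have := hf.descend_of_le hj hdesc hr.le
    rw [Order.succ_eq_add_one]
    omega

lemma not_eq_and_succ_eq (hf : IsVShapedOn f n) (hij : i < j) (hj : j < n) :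
    ¬(f i = f j ∧ f (i + 1) = f (j + 1)) := by
  rintro ⟨h₀, h₁⟩
  rcases hf.step i (by omega) with hasc | hdesc
  · exact (hf.strictMonoOn_of_ascend hasc ⟨le_rfl, by omega⟩ ⟨hij.le, hj.le⟩ hij).ne h₀
  · have hdesc_j : f j = f (j + 1) + 1 := by omega
    exact (hf.strictAntiOn_of_descend hj hdesc_j hij.le Set.self_mem_Iic hij).ne' h₀

end IsVShapedOn

namespace SimpleGraph

variable {V : Type*} {G : SimpleGraph V}

lemma Reachable.dist_map_le {V' : Type*} {G' : SimpleGraph V'} (φ : G →g G') {u v : V}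
    (huv : G.Reachable u v) : G'.dist (φ u) (φ v) ≤ G.dist u v := by
  obtain ⟨p, hp⟩ := huv.exists_walk_length_eq_dist
  simpa [hp] using G'.dist_le (p.map φ)

lemma IsTree.eq_of_adj_of_dist_add_one (hG : G.IsTree) {c u v w : V} (hv : G.Adj u v)
    (hw : G.Adj u w) (hdv : G.dist c v + 1 = G.dist c u) (hdw : G.dist c w + 1 = G.dist c u) :
    v = w := by
  classical
  obtain ⟨q, hq, hql⟩ := hG.connected.exists_path_of_dist c u
  have key : ∀ v, G.Adj u v → G.dist c v + 1 = G.dist c u → v = q.penultimate := by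
    intro v hv hdv
    obtain ⟨q', hq', hq'l⟩ := hG.connected.exists_path_of_dist c v
    have hu : u ∉ q'.support := fun hu ↦ by
      have := G.dist_le (q'.takeUntil u hu)
      have := q'.length_takeUntil_le_length hu
      omega
    exact hG.isAcyclic.eq_penultimate_of_adj_end hq hv
      (hG.isAcyclic.mem_support_of_ne_mem_support_of_adj_of_isPath hq hq' hv hu)
  rw [key v hv hdv, key w hw hdw]

lemma IsTree.isVShapedOn_dist_getVert (hG : G.IsTree) {x y : V} {p : G.Walk x y} (hp : p.IsPath)
    (c : V) : IsVShapedOn (fun r ↦ G.dist c (p.getVert r)) p.length where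
  step r hr := (hG.dist_eq_dist_add_one_of_adj c (p.adj_getVert_succ hr)).symm
  ascend r hr hasc := by
    refine (hG.dist_eq_dist_add_one_of_adj c (p.adj_getVert_succ hr)).resolve_left
      fun hdesc ↦ ?_
    have := hG.eq_of_adj_of_dist_add_one (p.adj_getVert_succ (by omega : r < p.length)).symm
      (p.adj_getVert_succ hr) hasc.symm hdesc.symm
    have := hp.getVert_injOn (by simp; omega : r ∈ {i | i ≤ p.length})
      (by simp; omega : r + 2 ∈ {i | i ≤ p.length}) this
    omega

end SimpleGraph

section GroupAction

variable {G α : Type*} [Group G] [MulAction G α]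

lemma exists_lt_lt_smul_eq_of_card_lt {e : ℕ → α} {n : ℕ} (t : Finset α)
    (ht : ∀ r < n, ∃ x ∈ t, ∃ g : G, g • x = e r) (hcard : #t < n) :
    ∃ i j, i < j ∧ j < n ∧ ∃ g : G, g • e i = e j := by
  classical
  let orbitOf : α → MulAction.orbitRel.Quotient G α := Quotient.mk _
  have hmaps : ∀ r ∈ range n, orbitOf (e r) ∈ t.image orbitOf := fun r hr ↦ by
    obtain ⟨x, hx, g, hgx⟩ := ht r (mem_range.1 hr)
    exact mem_image.2 ⟨x, hx, (Quotient.sound (MulAction.orbitRel_apply.2 ⟨g, hgx⟩)).symm⟩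
  obtain ⟨i, hi, j, hj, hne, hij⟩ := exists_ne_map_eq_of_card_lt_of_maps_to
    (card_image_le.trans_lt (hcard.trans_eq (card_range n).symm)) hmaps
  obtain ⟨g, hg⟩ := MulAction.mem_orbit_iff.1 (MulAction.orbitRel_apply.1 (Quotient.exact hij))
  rw [mem_range] at hi hj
  rcases hne.lt_or_gt with hlt | hlt
  · exact ⟨i, j, hlt, hj, g⁻¹, by rw [inv_smul_eq_iff, hg]⟩
  · exact ⟨j, i, hlt, hi, g, hg⟩

lemma exists_mem_union_image_swap_smul_eq [DecidableEq α] {s : Finset (α × α)} {u v : α}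
    (h : ∃ g : G, ∃ pq ∈ s, (g • pq.1 = u ∧ g • pq.2 = v) ∨ (g • pq.1 = v ∧ g • pq.2 = u)) :
    ∃ x ∈ s ∪ s.image Prod.swap, ∃ g : G, g • x = (u, v) := by
  obtain ⟨g, pq, hpq, ⟨h₁, h₂⟩ | ⟨h₁, h₂⟩⟩ := h
  · exact ⟨pq, mem_union_left _ hpq, g, Prod.ext h₁ h₂⟩
  · exact ⟨pq.swap, mem_union_right _ (mem_image_of_mem _ hpq), g, Prod.ext h₂ h₁⟩

variable {V : Type*} [MulAction G V] {Y : SimpleGraph V}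

lemma SimpleGraph.Connected.dist_smul_smul (hY : Y.Connected)
    (hact : ∀ (g : G) (u v : V), Y.Adj u v → Y.Adj (g • u) (g • v)) (g : G) (u v : V) :
    Y.dist (g • u) (g • v) = Y.dist u v := by
  let φ (g : G) : Y →g Y := ⟨(g • ·), hact g _ _⟩
  refine le_antisymm ((hY u v).dist_map_le (φ g)) ?_
  simpa [φ] using (hY (g • u) (g • v)).dist_map_le (φ g⁻¹)

lemma SimpleGraph.IsTree.smul_ne_self_of_smul_getVert (hY : Y.IsTree)
    (hact : ∀ (g : G) (u v : V), Y.Adj u v → Y.Adj (g • u) (g • v))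
    {x y : V} {p : Y.Walk x y} (hp : p.IsPath) {i j : ℕ} (hij : i < j) (hj : j < p.length)
    {g : G} (h₀ : g • p.getVert i = p.getVert j) (h₁ : g • p.getVert (i + 1) = p.getVert (j + 1))
    (z : V) : g • z ≠ z := fun hz ↦ by
  have hdist (a : V) : Y.dist z (g • a) = Y.dist z a := by
    conv_lhs => rw [← hz]
    exact hY.connected.dist_smul_smul hact g z a
  exact (hY.isVShapedOn_dist_getVert hp z).not_eq_and_succ_eq hij hj
    ⟨by rw [← h₀, hdist], by rw [← h₁, hdist]⟩

end GroupAction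

theorem unbounded_cofinite_action_has_hyperbolic_general {H V : Type*} [Group H] [MulAction H V]
    (Y : SimpleGraph V) (hY : Y.IsTree)
    (hact : ∀ (h : H) (u v : V), Y.Adj u v → Y.Adj (h • u) (h • v))
    (hdiam : ∀ n : ℕ, ∃ (x y : V) (p : Y.Walk x y), p.IsPath ∧ n < p.length)
    (horb : ∃ s : Finset (V × V),
      (∀ pq ∈ s, Y.Adj pq.1 pq.2) ∧
      ∀ u v : V, Y.Adj u v →
        ∃ h : H, ∃ pq ∈ s, (h • pq.1 = u ∧ h • pq.2 = v) ∨
          (h • pq.1 = v ∧ h • pq.2 = u)) :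
    ∃ h : H, ∀ x : V, h • x ≠ x := by
  classical
  obtain ⟨s, -, hs⟩ := horb
  obtain ⟨x, y, p, hp, hlen⟩ := hdiam (2 * #s)
  have hcard : #(s ∪ s.image Prod.swap) < p.length := by
    have := card_union_le s (s.image Prod.swap)
    have := card_image_le (s := s) (f := Prod.swap)
    omega
  obtain ⟨i, j, hij, hj, g, hg⟩ := exists_lt_lt_smul_eq_of_card_lt
    (e := fun r ↦ (p.getVert r, p.getVert (r + 1))) _
    (fun r hr ↦ exists_mem_union_image_swap_smul_eq (hs _ _ (p.adj_getVert_succ hr))) hcard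
  rw [Prod.smul_mk, Prod.mk.injEq] at hg
  exact ⟨g, hY.smul_ne_self_of_smul_getVert hact hp hij hj hg.1 hg.2⟩

/-- If a group H acts (without inversions) on a tree Y of infinite
diameter with finitely many orbits of edges, then H contains a hyperbolic element
(an element fixing no vertex). -/
theorem unbounded_cofinite_action_has_hyperbolic {H V : Type*} [Group H] [MulAction H V]
    (Y : SimpleGraph V) (hY : Y.IsTree)
    (hact : ∀ (h : H) (u v : V), Y.Adj u v → Y.Adj (h • u) (h • v))
    (hni : ∀ (h : H) (u v : V), Y.Adj u v → ¬(h • u = v ∧ h • v = u))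
    (hdiam : ∀ n : ℕ, ∃ (x y : V) (p : Y.Walk x y), p.IsPath ∧ n < p.length)
    (horb : ∃ s : Finset (V × V),
      (∀ pq ∈ s, Y.Adj pq.1 pq.2) ∧
      ∀ u v : V, Y.Adj u v →
        ∃ h : H, ∃ pq ∈ s, (h • pq.1 = u ∧ h • pq.2 = v) ∨
          (h • pq.1 = v ∧ h • pq.2 = u)) :
    ∃ h : H, ∀ x : V, h • x ≠ x :=
  unbounded_cofinite_action_has_hyperbolic_general Y hY hact hdiam horb
end

section
/- Let G be a CSA group, let E be a nontrivial abelian subgroup of G, and let A = C_G(E) be the centralizer of E. If g ∈ G is such that the subgroup generated by E and g⁻¹Eg is abelian (i.e. g⁻¹Eg commutes elementwise with E), then g ∈ A. -/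
/-!
Pick `x ≠ 1` in `E`. Commutative transitivity makes `C(x)` abelian, and every abelian subgroup
containing `x` lies in `C(x)`, so `C(x)` is maximal abelian and hence malnormal. Since `g⁻¹ x g`
commutes with `x`, malnormality puts `g` in `C(x)`; as every element of `E` also commutes with
`x`, commutative transitivity then makes `g` commute with all of `E`.
-/

open Subgroup

def IsCommTransitive (G : Type*) [Group G] : Prop :=
  ∀ a b c : G, a ≠ 1 → b ≠ 1 → c ≠ 1 → Commute a b → Commute b c → Commute a c

def Subgroup.IsMalnormal {G : Type*} [Group G] (M : Subgroup G) : Prop :=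
  ∀ g : G, (∃ x : G, x ≠ 1 ∧ x ∈ M ∧ g * x * g⁻¹ ∈ M) → g ∈ M

section

variable {G : Type*} [Group G]

theorem IsCommTransitive.commute (hG : IsCommTransitive G) {a b c : G} (hb : b ≠ 1)
    (hab : Commute a b) (hbc : Commute b c) : Commute a c := by
  by_cases ha : a = 1
  · rw [ha]; exact Commute.one_left c
  by_cases hc : c = 1
  · rw [hc]; exact Commute.one_right a
  exact hG a b c ha hb hc hab hbc

theorem IsCommTransitive.centralizer_singleton_le_centralizer (hG : IsCommTransitive G) {x : G}
    (hx : x ≠ 1) {s : Set G} (hs : s ⊆ centralizer {x}) : centralizer {x} ≤ centralizer s :=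
  fun _ hg _ he =>
    (hG.commute hx (mem_centralizer_singleton_iff.1 hg)
      (mem_centralizer_singleton_iff.1 (hs he)).symm).symm.eq

theorem IsCommTransitive.isMulCommutative_centralizer_singleton (hG : IsCommTransitive G)
    {x : G} (hx : x ≠ 1) : IsMulCommutative (centralizer {x}) :=
  le_centralizer_iff_isMulCommutative.1 <|
    hG.centralizer_singleton_le_centralizer hx le_rfl

theorem le_centralizer_singleton_of_mem {N : Subgroup G} (hN : IsMulCommutative N) {x : G}
    (hx : x ∈ N) : N ≤ centralizer {x} :=
  (le_centralizer_iff_isMulCommutative.2 hN).trans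
    (centralizer_le (Set.singleton_subset_iff.2 hx))

theorem eq_centralizer_singleton_of_le {N : Subgroup G} (hN : IsMulCommutative N) {x : G}
    (hle : centralizer {x} ≤ N) : N = centralizer {x} :=
  le_antisymm (le_centralizer_singleton_of_mem hN (hle (mem_centralizer_singleton_iff.2 rfl))) hle

theorem Subgroup.IsMalnormal.mem_centralizer_singleton {x g : G}
    (hM : (centralizer {x}).IsMalnormal) (hx : x ≠ 1) (hg : Commute x (g⁻¹ * x * g)) :
    g ∈ centralizer {x} := by
  have hconj : g⁻¹ * x * g⁻¹⁻¹ ∈ centralizer {x} := by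
    rw [inv_inv, mem_centralizer_singleton_iff]
    exact hg.eq.symm
  exact inv_mem_iff.1 <| hM g⁻¹ ⟨x, hx, mem_centralizer_singleton_iff.2 rfl, hconj⟩

end

/-- Let G be a CSA group (commutative transitive, with malnormal maximal
abelian subgroups), E a nontrivial abelian subgroup, A = C_G(E). If g⁻¹Eg commutes
elementwise with E (i.e. ⟨E, g⁻¹Eg⟩ is abelian), then g ∈ A. -/
theorem csa_commuting_conjugate_in_centralizer {G : Type*} [Group G]
    (hCT : ∀ a b c : G, a ≠ 1 → b ≠ 1 → c ≠ 1 → Commute a b → Commute b c → Commute a c)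
    (hMal : ∀ M : Subgroup G, IsMulCommutative M →
      (∀ N : Subgroup G, IsMulCommutative N → M ≤ N → N = M) →
      ∀ g : G, (∃ x : G, x ≠ 1 ∧ x ∈ M ∧ g * x * g⁻¹ ∈ M) → g ∈ M)
    (E : Subgroup G) (hE : E ≠ ⊥) (hEc : IsMulCommutative E)
    (g : G) (hg : ∀ x ∈ E, ∀ y ∈ E, Commute x (g⁻¹ * y * g)) :
    g ∈ Subgroup.centralizer (E : Set G) := by
  have hG : IsCommTransitive G := hCT
  obtain ⟨x, hxE, hx⟩ := E.bot_or_exists_ne_one.resolve_left hE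
  have hmalnormal : (centralizer {x}).IsMalnormal :=
    hMal _ (hG.isMulCommutative_centralizer_singleton hx)
      fun _ hN hle => eq_centralizer_singleton_of_le hN hle
  have hgx : g ∈ centralizer {x} := hmalnormal.mem_centralizer_singleton hx (hg x hxE x hxE)
  exact hG.centralizer_singleton_le_centralizer hx (le_centralizer_singleton_of_mem hEc hxE) hgx
end

section
/- Let a group G act on a tree T, and let ℰ be a conjugation-invariant family of subgroups of G such that every member of ℰ fixes a vertex of T and every edge stabilizer of T belongs to ℰ. Let ~ be the equivalence relation on ℰ generated by inclusion (the smallest equivalence relation with A ~ B whenever A ≤ B with A, B ∈ ℰ). If A, B ∈ ℰ satisfy A ~ B and fix vertices a and b of T respectively, then for every edge e lying on the path [a,b] one has G_e ~ A. -/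
/-!
Every `g` fixing two vertices of a tree fixes the path between them, so a subgroup fixing `a` and
`b` lies in every edge stabilizer along `[a, b]`. Since `inclRel ℰ` is symmetric,
`A ~ B` is a chain `A = C₀, …, Cₙ = B` of comparable members of `ℰ`; induct along it with the
invariant "for every vertex `d` fixed by `Cᵢ`, each edge stabilizer on `[a, d]` is `~ A`".
A step to a larger group keeps it, since its fixed vertices are fixed by `Cᵢ`. For a step to a
smaller group `D`, pick `c` fixed by `Cᵢ` (members of `ℰ` are elliptic): then
`[a, d] ⊆ [a, c] ∪ [c, d]`, and the edge stabilizers on `[c, d]` contain `D`, which fixes `c`.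
-/

/-- The stabilizer of the edge (u,v): elements fixing both endpoints. -/
noncomputable def edgeStab (G : Type*) [Group G] {V : Type*} [MulAction G V] (u v : V) :
    Subgroup G :=
  MulAction.stabilizer G u ⊓ MulAction.stabilizer G v

/-- The relation on the family ℰ given by nested inclusion; the equivalence relation
generated by inclusion is its equivalence closure `Relation.EqvGen`. -/
def inclRel {G : Type*} [Group G] (ℰ : Set (Subgroup G)) (A B : Subgroup G) : Prop :=
  A ∈ ℰ ∧ B ∈ ℰ ∧ (A ≤ B ∨ B ≤ A)

open Relation SimpleGraph

namespace SimpleGraph.IsAcyclic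

variable {V : Type*} {T : SimpleGraph V}

theorem apply_eq_self_of_mem_support (hT : T.IsAcyclic) {f : T →g T}
    (hf : Function.Injective f) {a b : V} {p : T.Walk a b} (hp : p.IsPath) (ha : f a = a)
    (hb : f b = b) {u : V} (hu : u ∈ p.support) : f u = u := by
  have hmap : (p.map f).copy ha hb = p := congrArg Subtype.val <|
    (hT.subsingleton_path _ _).elim ⟨_, (Walk.isPath_copy _ _ _).2 (hp.map hf)⟩ ⟨p, hp⟩
  have hsupp : p.support.map f = p.support := by
    simpa only [Walk.support_copy, Walk.support_map] using congrArg Walk.support hmap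
  exact List.map_inj_left.1 (hsupp.trans (List.map_id _).symm) u hu

theorem edges_subset_edges_append (hT : T.IsAcyclic) {a b c : V} {p : T.Walk a b}
    (hp : p.IsPath) (q : T.Walk a c) (r : T.Walk c b) : p.edges ⊆ q.edges ++ r.edges := by
  classical
  have hbypass : (q.append r).bypass = p := congrArg Subtype.val <|
    (hT.subsingleton_path _ _).elim ⟨_, (q.append r).bypass_isPath⟩ ⟨p, hp⟩
  rw [← Walk.edges_append, ← hbypass]
  exact Walk.edges_bypass_subset_edges _

end SimpleGraph.IsAcyclic

instance inclRel.instSymm {G : Type*} [Group G] (ℰ : Set (Subgroup G)) :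
    Std.Symm (inclRel ℰ) :=
  ⟨fun _ _ ⟨hA, hB, hle⟩ => ⟨hB, hA, hle.symm⟩⟩

section TreeAction

variable {G V : Type*} [Group G] [MulAction G V] {T : SimpleGraph V}

theorem le_edgeStab_of_mem_edges (hT : T.IsAcyclic)
    (hact : ∀ (g : G) (u v : V), T.Adj u v → T.Adj (g • u) (g • v)) {H : Subgroup G}
    {a b : V} (ha : ∀ g ∈ H, g • a = a) (hb : ∀ g ∈ H, g • b = b) {p : T.Walk a b}
    (hp : p.IsPath) {u v : V} (he : s(u, v) ∈ p.edges) : H ≤ edgeStab G u v := by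
  intro g hg
  let f : T →g T := ⟨(g • ·), hact g _ _⟩
  have hfix : ∀ w ∈ p.support, g • w = w := fun _ hw =>
    hT.apply_eq_self_of_mem_support (f := f) (MulAction.injective g) hp (ha g hg) (hb g hg) hw
  exact ⟨hfix u (p.fst_mem_support_of_mem_edges he), hfix v (p.snd_mem_support_of_mem_edges he)⟩

theorem eqvGen_edgeStab_of_reflTransGen (hT : T.IsTree)
    (hact : ∀ (g : G) (u v : V), T.Adj u v → T.Adj (g • u) (g • v)) {ℰ : Set (Subgroup G)}
    (hell : ∀ A ∈ ℰ, ∃ v : V, ∀ g ∈ A, g • v = v)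
    (hedge : ∀ u v : V, T.Adj u v → edgeStab G u v ∈ ℰ) {A D : Subgroup G} (hA : A ∈ ℰ)
    (hAD : ReflTransGen (inclRel ℰ) A D) {a : V} (hAfix : ∀ g ∈ A, g • a = a) :
    ∀ d : V, (∀ g ∈ D, g • d = d) → ∀ p : T.Walk a d, p.IsPath → ∀ u v : V,
      s(u, v) ∈ p.edges → EqvGen (inclRel ℰ) (edgeStab G u v) A := by
  induction hAD with
  | refl =>
    intro d hd p hp u v he
    exact .rel _ _ ⟨hedge u v (p.adj_of_mem_edges he), hA,
      .inr (le_edgeStab_of_mem_edges hT.isAcyclic hact hAfix hd hp he)⟩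
  | @tail C D hAC hCD ih =>
    have hAD : EqvGen (inclRel ℰ) A D := EqvGen.reflTransGen_le_eqvGen _ _ _ (hAC.tail hCD)
    obtain ⟨hC, hD, hle | hle⟩ := hCD
    · exact fun d hd => ih d fun g hg => hd g (hle hg)
    intro d hd p hp u v he
    obtain ⟨c, hc⟩ := hell C hC
    obtain ⟨q, hq, -⟩ := hT.existsUnique_path a c
    obtain ⟨r, hr, -⟩ := hT.existsUnique_path c d
    rcases List.mem_append.1 (hT.isAcyclic.edges_subset_edges_append hp q r he) with he | he
    · exact ih c hc q hq u v he
    · have hDe : inclRel ℰ (edgeStab G u v) D := ⟨hedge u v (r.adj_of_mem_edges he), hD,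
        .inr (le_edgeStab_of_mem_edges hT.isAcyclic hact (fun g hg => hc g (hle hg)) hd hr he)⟩
      exact .trans _ _ _ (.rel _ _ hDe) (.symm _ _ hAD)

end TreeAction

theorem inclusion_relation_axiom3_general {G V : Type*} [Group G] [MulAction G V]
    (T : SimpleGraph V) (hT : T.IsTree)
    (hact : ∀ (g : G) (u v : V), T.Adj u v → T.Adj (g • u) (g • v))
    (ℰ : Set (Subgroup G))
    (hell : ∀ A ∈ ℰ, ∃ v : V, ∀ g ∈ A, g • v = v)
    (hedge : ∀ u v : V, T.Adj u v → edgeStab G u v ∈ ℰ)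
    (A : Subgroup G) (hA : A ∈ ℰ) (B : Subgroup G)
    (hsim : Relation.EqvGen (inclRel ℰ) A B)
    (a b : V) (hAfix : ∀ g ∈ A, g • a = a) (hBfix : ∀ g ∈ B, g • b = b) :
    ∀ (p : T.Walk a b), p.IsPath → ∀ u v : V, s(u, v) ∈ p.edges →
      Relation.EqvGen (inclRel ℰ) (edgeStab G u v) A := by
  rw [EqvGen.eqvGen_eq_reflTransGen] at hsim
  exact eqvGen_edgeStab_of_reflTransGen hT hact hell hedge hA hsim hAfix b hBfix

/-- Let G act (without inversions) on a tree T, and let ℰ be a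
conjugation-invariant family of subgroups, all elliptic in T, containing every edge
stabilizer. If A, B ∈ ℰ are equivalent for the equivalence relation generated by
inclusion and fix vertices a, b, then every edge stabilizer along [a,b] is equivalent
to A. -/
theorem inclusion_relation_axiom3 {G V : Type*} [Group G] [MulAction G V]
    (T : SimpleGraph V) (hT : T.IsTree)
    (hact : ∀ (g : G) (u v : V), T.Adj u v → T.Adj (g • u) (g • v))
    (hni : ∀ (g : G) (u v : V), T.Adj u v → ¬(g • u = v ∧ g • v = u))
    (ℰ : Set (Subgroup G))
    (hconj : ∀ A ∈ ℰ, ∀ g : G, Subgroup.map (MulAut.conj g).toMonoidHom A ∈ ℰ)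
    (hell : ∀ A ∈ ℰ, ∃ v : V, ∀ g ∈ A, g • v = v)
    (hedge : ∀ u v : V, T.Adj u v → edgeStab G u v ∈ ℰ)
    (A : Subgroup G) (hA : A ∈ ℰ) (B : Subgroup G) (hB : B ∈ ℰ)
    (hsim : Relation.EqvGen (inclRel ℰ) A B)
    (a b : V) (hAfix : ∀ g ∈ A, g • a = a) (hBfix : ∀ g ∈ B, g • b = b) :
    ∀ (p : T.Walk a b), p.IsPath → ∀ u v : V, s(u, v) ∈ p.edges →
      Relation.EqvGen (inclRel ℰ) (edgeStab G u v) A :=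
  inclusion_relation_axiom3_general T hT hact ℰ hell hedge A hA B hsim a b hAfix hBfix
end
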